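/- arXiv:1012.5751 — 9 statements merged into one kernel-verified Lean document; each statement's English description precedes it below -/
import Mathlib

section
/- If a function f: ℝ → ℝ is detachable at every point of a closed interval [a,b] (i.e., for each x the limit as h → 0 of sgn(f(x+h) − f(x)) exists), then the image f([a,b]) is countable; in particular, f is a step function on [a,b] in the sense that it takes only countably many values. -/
open Filter Topology Set

/-- Right detachment: `lim_{h→0⁺} sgn (f (x+h) - f x) = L`. -/
def HasRightDet (f : ℝ → ℝ) (x L : ℝ) : Prop :=
  Filter.Tendsto (fun h : ℝ => Real.sign (f (x + h) - f x)) (𝓝[>] (0:ℝ)) (𝓝 L)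

/-- Left detachment: `lim_{h→0⁻} sgn (f (x+h) - f x) = L`. -/
def HasLeftDet (f : ℝ → ℝ) (x L : ℝ) : Prop :=
  Filter.Tendsto (fun h : ℝ => Real.sign (f (x + h) - f x)) (𝓝[<] (0:ℝ)) (𝓝 L)

/-- (Two-sided) detachment: `lim_{h→0} sgn (f (x+h) - f x) = L`. -/
def HasDet (f : ℝ → ℝ) (x L : ℝ) : Prop :=
  Filter.Tendsto (fun h : ℝ => Real.sign (f (x + h) - f x)) (𝓝[≠] (0:ℝ)) (𝓝 L)

/-- Signposted detachment: `lim_{h→0} sgn (h * (f (x+h) - f x)) = L`. -/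
def HasSignedDet (f : ℝ → ℝ) (x L : ℝ) : Prop :=
  Filter.Tendsto (fun h : ℝ => Real.sign (h * (f (x + h) - f x))) (𝓝[≠] (0:ℝ)) (𝓝 L)

/-! A function detachable at `x` has, on some interval `(p, q)` with rational endpoints around `x`,
the same sign `c ∈ {-1, 0, 1}` for `f z - f x` at every `z ≠ x`. Two such points for the same
`(p, q, c)` must give `c = 0` (the signs of `f x₂ - f x₁` and `f x₁ - f x₂` are opposite), so they
share their value. Hence the values are indexed by the countably many triples `(p, q, c)`. -/

theorem Filter.Tendsto.eventually_eq_of_eventually_mem_finite {α X : Type*} [TopologicalSpace X]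
    [T1Space X] {l : Filter α} {g : α → X} {s : Set X} {x : X} (hs : s.Finite)
    (hgs : ∀ᶠ a in l, g a ∈ s) (hg : Tendsto g l (𝓝 x)) : ∀ᶠ a in l, g a = x := by
  have hnhds : (s \ {x})ᶜ ∈ 𝓝 x :=
    hs.sdiff.isClosed.isOpen_compl.mem_nhds fun hx => hx.2 rfl
  filter_upwards [hgs, hg hnhds] with a has hax
  by_contra hne
  exact hax ⟨has, hne⟩

def signConstPoints {α : Type*} (f : α → ℝ) (U : Set α) (c : ℝ) : Set α :=
  {x ∈ U | ∀ z ∈ U, z ≠ x → Real.sign (f z - f x) = c}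

theorem subsingleton_image_signConstPoints {α : Type*} (f : α → ℝ) (U : Set α) (c : ℝ) :
    (f '' signConstPoints f U c).Subsingleton := by
  rintro _ ⟨x₁, ⟨hx₁, h₁⟩, rfl⟩ _ ⟨x₂, ⟨hx₂, h₂⟩, rfl⟩
  by_cases hx : x₂ = x₁
  · rw [hx]
  have h₂₁ : Real.sign (f x₂ - f x₁) = c := h₁ x₂ hx₂ hx
  have h₁₂ : Real.sign (f x₂ - f x₁) = -c := by
    rw [← h₂ x₁ hx₁ (Ne.symm hx), ← Real.sign_neg, neg_sub]
  have hc : c = 0 := by linarith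
  rw [hc, Real.sign_eq_zero_iff, sub_eq_zero] at h₂₁
  exact h₂₁.symm

namespace HasDet

variable {f : ℝ → ℝ} {x L : ℝ}

theorem eventually_sign_eq (hL : HasDet f x L) :
    ∀ᶠ h in 𝓝[≠] (0 : ℝ), Real.sign (f (x + h) - f x) = L :=
  hL.eventually_eq_of_eventually_mem_finite (s := {-1, 0, 1}) (toFinite _)
    (Eventually.of_forall fun _ => Real.sign_apply_eq _)

theorem mem_sign_values (hL : HasDet f x L) : L ∈ ({-1, 0, 1} : Set ℝ) := by
  obtain ⟨h, hh⟩ := hL.eventually_sign_eq.exists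
  exact hh ▸ Real.sign_apply_eq _

theorem exists_rat_mem_signConstPoints (hL : HasDet f x L) :
    ∃ p q : ℚ, x ∈ signConstPoints f (Ioo (p : ℝ) q) L := by
  have hev : ∀ᶠ z in 𝓝[≠] x, Real.sign (f z - f x) = L := by
    have hmap : map (x + ·) (𝓝[≠] (0 : ℝ)) = 𝓝[≠] x := by simp
    rw [← hmap, eventually_map]
    exact hL.eventually_sign_eq
  obtain ⟨l, u, hxlu, hlu⟩ := mem_nhds_iff_exists_Ioo_subset.1 (eventually_nhdsWithin_iff.1 hev)
  obtain ⟨p, hlp, hpx⟩ := exists_rat_btwn hxlu.1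
  obtain ⟨q, hxq, hqu⟩ := exists_rat_btwn hxlu.2
  exact ⟨p, q, ⟨⟨hpx, hxq⟩, fun z hz hzx => hlu ⟨hlp.trans hz.1, hz.2.trans hqu⟩ hzx⟩⟩

end HasDet

theorem detachable_on_Icc_image_countable_general (f : ℝ → ℝ) (a b : ℝ)
    (hdet : ∀ x ∈ Set.Icc a b, ∃ L : ℝ, HasDet f x L) :
    (f '' Set.Icc a b).Countable := by
  have hcover : f '' Icc a b ⊆ ⋃ (p : ℚ) (q : ℚ) (c ∈ ({-1, 0, 1} : Set ℝ)),
      f '' signConstPoints f (Ioo (p : ℝ) q) c := by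
    rintro _ ⟨x, hx, rfl⟩
    obtain ⟨L, hL⟩ := hdet x hx
    obtain ⟨p, q, hpq⟩ := hL.exists_rat_mem_signConstPoints
    exact mem_iUnion₂.2 ⟨p, q, mem_iUnion₂.2 ⟨L, hL.mem_sign_values, mem_image_of_mem f hpq⟩⟩
  refine (countable_iUnion fun p => countable_iUnion fun q => ?_).mono hcover
  exact (toFinite _).countable.biUnion fun c _ =>
    (subsingleton_image_signConstPoints f _ c).countable

/-- If `f` is detachable at every point of `[a,b]`, then `f '' [a,b]` is countable
(so `f` is a step function there, taking only countably many values). -/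
theorem detachable_on_Icc_image_countable (f : ℝ → ℝ) (a b : ℝ) (hab : a ≤ b)
    (hdet : ∀ x ∈ Set.Icc a b, ∃ L : ℝ, HasDet f x L) :
    (f '' Set.Icc a b).Countable :=
  detachable_on_Icc_image_countable_general f a b hdet
end

section
/- If f: ℝ → ℝ is signposted detachable on an open interval (a,b) with signposted detachment identically equal to +1 on (a,b), then f is strictly increasing on (a,b). -/
open Filter Topology Set

/-!
Signposted detachment `+1` at `x` means that `f` lies strictly below `f x` just to the left of `x`
and strictly above it just to the right. Such a local strict increase at every point of an
interval forces global strict increase: for `x < y`, let `c` be the supremum of the points `t`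
such that `f x < f` on `(x, t]`. The left half of the local condition at `c` shows that `c` itself
is such a point, and the right half shows that `c < y` would allow going past `c`.
-/

section LocalToGlobal

variable {α β : Type*} [ConditionallyCompleteLinearOrder α] [TopologicalSpace α] [OrderTopology α]
  [DenselyOrdered α] [Preorder β] {f : α → β}

theorem lt_of_eventually_lt_of_eventually_gt {x y : α} (hxy : x < y)
    (hleft : ∀ z ∈ Ioc x y, ∀ᶠ w in 𝓝[<] z, f w < f z)
    (hright : ∀ z ∈ Ico x y, ∀ᶠ w in 𝓝[>] z, f z < f w) : f x < f y := by
  set T := {t ∈ Icc x y | ∀ u ∈ Ioc x t, f x < f u}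
  have hxT : x ∈ T := ⟨left_mem_Icc.2 hxy.le, fun u hu => absurd hu.2 hu.1.not_ge⟩
  have hT : BddAbove T := ⟨y, fun t ht => ht.1.2⟩
  set c := sSup T
  have hxc : x ≤ c := le_csSup hT hxT
  have hcy : c ≤ y := csSup_le ⟨x, hxT⟩ fun t ht => ht.1.2
  have hcT : ∀ u ∈ Ioc x c, f x < f u := by
    rintro u ⟨hxu, huc⟩
    rcases huc.lt_or_eq with huc | rfl
    · obtain ⟨t, htT, hut⟩ := exists_lt_of_lt_csSup ⟨x, hxT⟩ huc
      exact htT.2 u ⟨hxu, hut.le⟩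
    obtain ⟨l, hlc, hl⟩ := (mem_nhdsLT_iff_exists_Ioo_subset' hxu).1 (hleft _ ⟨hxu, hcy⟩)
    obtain ⟨t, htT, hlt⟩ := exists_lt_of_lt_csSup ⟨x, hxT⟩ (max_lt hlc hxu)
    have hxt : x < t := (le_max_right _ _).trans_lt hlt
    rcases (le_csSup hT htT).lt_or_eq with htc | rfl
    · exact (htT.2 t ⟨hxt, le_rfl⟩).trans (hl ⟨(le_max_left _ _).trans_lt hlt, htc⟩)
    · exact htT.2 _ ⟨hxt, le_rfl⟩
  have hfxc : f x ≤ f c := by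
    rcases hxc.lt_or_eq with hxc | hxc
    · exact (hcT c ⟨hxc, le_rfl⟩).le
    · exact hxc ▸ le_rfl
  rcases hcy.lt_or_eq with hcy | hcy
  · obtain ⟨m, hcm, hm⟩ := (mem_nhdsGT_iff_exists_Ioo_subset' hcy).1 (hright c ⟨hxc, hcy⟩)
    obtain ⟨t, hct, htm⟩ := exists_between (lt_min hcm hcy)
    have htT : t ∈ T := by
      refine ⟨⟨hxc.trans hct.le, htm.le.trans (min_le_right _ _)⟩, fun u ⟨hxu, hut⟩ => ?_⟩
      rcases le_or_gt u c with huc | hcu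
      · exact hcT u ⟨hxu, huc⟩
      · exact hfxc.trans_lt (hm ⟨hcu, hut.trans_lt (htm.trans_le (min_le_left _ _))⟩)
    exact absurd (le_csSup hT htT) hct.not_ge
  · exact hcT y ⟨hxy, hcy.ge⟩

theorem Set.OrdConnected.strictMonoOn_of_eventually {s : Set α} (hs : s.OrdConnected)
    (hleft : ∀ x ∈ s, ∀ᶠ y in 𝓝[<] x, f y < f x)
    (hright : ∀ x ∈ s, ∀ᶠ y in 𝓝[>] x, f x < f y) : StrictMonoOn f s :=
  fun _ hx _ hy hxy => lt_of_eventually_lt_of_eventually_gt hxy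
    (fun z hz => hleft z (hs.out hx hy (Ioc_subset_Icc_self hz)))
    (fun z hz => hright z (hs.out hx hy (Ico_subset_Icc_self hz)))

end LocalToGlobal

namespace Real

theorem pos_of_sign_pos {r : ℝ} (h : 0 < sign r) : 0 < r := by
  contrapose! h
  unfold sign
  split_ifs <;> linarith

theorem neg_of_sign_neg {r : ℝ} (h : sign r < 0) : r < 0 := by
  contrapose! h
  unfold sign
  split_ifs <;> linarith

theorem sign_mul_of_pos {a : ℝ} (ha : 0 < a) (r : ℝ) : sign (a * r) = sign r := by
  simp only [sign, mul_neg_iff, mul_pos_iff, ha, ha.not_gt, true_and, false_and, or_false]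

theorem sign_mul_of_neg {a : ℝ} (ha : a < 0) (r : ℝ) : sign (a * r) = -sign r := by
  rw [← neg_neg a, neg_mul, sign_neg, sign_mul_of_pos (neg_pos.2 ha)]

end Real

section Translation

variable {G : Type*} [AddCommGroup G] [PartialOrder G] [IsOrderedAddMonoid G] [TopologicalSpace G]
  [ContinuousSub G]

theorem tendsto_sub_const_nhdsGT (x : G) : Tendsto (· - x) (𝓝[>] x) (𝓝[>] 0) :=
  tendsto_nhdsWithin_iff.2 ⟨((continuous_sub_right x).tendsto' x 0 (sub_self x)).mono_left
    nhdsWithin_le_nhds, eventually_nhdsWithin_of_forall fun _ hy => mem_Ioi.2 (sub_pos.2 hy)⟩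

theorem tendsto_sub_const_nhdsLT (x : G) : Tendsto (· - x) (𝓝[<] x) (𝓝[<] 0) :=
  tendsto_nhdsWithin_iff.2 ⟨((continuous_sub_right x).tendsto' x 0 (sub_self x)).mono_left
    nhdsWithin_le_nhds, eventually_nhdsWithin_of_forall fun _ hy => mem_Iio.2 (sub_neg.2 hy)⟩

end Translation

section Detachment

variable {f : ℝ → ℝ} {x L : ℝ}

theorem HasSignedDet.hasRightDet (h : HasSignedDet f x L) : HasRightDet f x L :=
  (h.mono_left (nhdsWithin_mono _ fun _ => ne_of_gt)).congr'
    (eventually_nhdsWithin_of_forall fun _ hh => Real.sign_mul_of_pos hh _)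

theorem HasSignedDet.hasLeftDet (h : HasSignedDet f x L) : HasLeftDet f x (-L) :=
  (h.mono_left (nhdsWithin_mono _ fun _ => ne_of_lt)).neg.congr'
    (eventually_nhdsWithin_of_forall fun _ hh => by rw [Real.sign_mul_of_neg hh, neg_neg])

theorem HasRightDet.eventually_lt (h : HasRightDet f x L) (hL : 0 < L) :
    ∀ᶠ y in 𝓝[>] x, f x < f y := by
  filter_upwards [(h.comp (tendsto_sub_const_nhdsGT x)).eventually (lt_mem_nhds hL)] with y hy
  simpa [sub_pos] using Real.pos_of_sign_pos hy

theorem HasLeftDet.eventually_gt (h : HasLeftDet f x L) (hL : L < 0) :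
    ∀ᶠ y in 𝓝[<] x, f y < f x := by
  filter_upwards [(h.comp (tendsto_sub_const_nhdsLT x)).eventually (gt_mem_nhds hL)] with y hy
  simpa [sub_neg] using Real.neg_of_sign_neg hy

end Detachment

/-- If the signposted detachment of `f` is identically `+1` on `(a,b)`,
then `f` is strictly increasing on `(a,b)`. -/
theorem signedDet_one_strictMonoOn (f : ℝ → ℝ) (a b : ℝ)
    (hdet : ∀ x ∈ Set.Ioo a b, HasSignedDet f x 1) :
    StrictMonoOn f (Set.Ioo a b) :=
  ordConnected_Ioo.strictMonoOn_of_eventually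
    (fun x hx => (hdet x hx).hasLeftDet.eventually_gt (by norm_num))
    (fun x hx => (hdet x hx).hasRightDet.eventually_lt one_pos)
end

section
/- If f: ℝ → ℝ is continuous on an open interval (a,b) and signposted detachable at every point of (a,b), then f is strictly monotonous on (a,b) (strictly increasing, strictly decreasing, or constant). -/
open Filter Topology Set

/-!
At every point `x`, signposted detachment leaves only two possibilities: `f` is constant near `x`,
or `f` takes the value `f x` nowhere else near `x`; at a local extremum the limit is squeezed
between `0 ≤ L` (from one side) and `L ≤ 0` (from the other), so only the first can occur.
If `f` is injective on `(a,b)`, continuity makes it strictly monotone. Otherwise `f x = f y`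
with `x < y`, and the extremum of `f` on `[x,y]` inside `(x,y)` is a point where `f` is locally
constant, with value `c` say. The set of points near which `f ≡ c` is open, and it is closed in
`(a,b)`: at a limit point `x`, continuity gives `f x = c`, so `x` is not isolated in the level set
`f = f x`, and `f` must be locally constant at `x`. By connectedness the set is all of `(a,b)`.
-/

lemma Real.sign_nonneg_of_nonneg {r : ℝ} (hr : 0 ≤ r) : 0 ≤ Real.sign r := by
  rcases hr.eq_or_lt with rfl | hr
  · simp
  · simp [Real.sign_of_pos hr]

lemma Real.eq_zero_of_abs_sign_lt_one {r : ℝ} (hr : |Real.sign r| < 1) : r = 0 := by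
  by_contra h
  rcases Real.sign_apply_eq_of_ne_zero r h with h | h <;> simp [h] at hr

namespace HasSignedDet

variable {f : ℝ → ℝ} {x L : ℝ}

lemma tendsto_sign (hL : HasSignedDet f x L) :
    Tendsto (fun y => Real.sign ((y - x) * (f y - f x))) (𝓝[≠] x) (𝓝 L) := by
  have hmap : 𝓝[≠] x = map (x + ·) (𝓝[≠] 0) := by simp
  rw [hmap, tendsto_map'_iff]
  simpa [Function.comp_def, HasSignedDet] using hL

lemma neg (hL : HasSignedDet f x L) : HasSignedDet (-f) x (-L) := by
  have hneg : ∀ h, h * ((-f) (x + h) - (-f) x) = -(h * (f (x + h) - f x)) := fun h => by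
    simp only [Pi.neg_apply]; ring
  simpa only [HasSignedDet, hneg, Real.sign_neg] using Tendsto.neg hL

lemma eq_zero_of_isLocalMin (hL : HasSignedDet f x L) (hx : IsLocalMin f x) : L = 0 := by
  have hsign := hL.tendsto_sign
  have hx' : ∀ᶠ y in 𝓝[≠] x, 0 ≤ f y - f x :=
    nhdsWithin_le_nhds (hx.mono fun y hy => sub_nonneg.mpr hy)
  refine le_antisymm (le_of_tendsto (hsign.mono_left (nhdsLT_le_nhdsNE x)) ?_)
    (ge_of_tendsto (hsign.mono_left (nhdsGT_le_nhdsNE x)) ?_)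
  · filter_upwards [nhdsLT_le_nhdsNE x hx', self_mem_nhdsWithin] with y hy (hyx : y < x)
    rw [← neg_nonneg, ← Real.sign_neg]
    exact Real.sign_nonneg_of_nonneg (by nlinarith)
  · filter_upwards [nhdsGT_le_nhdsNE x hx', self_mem_nhdsWithin] with y hy (hyx : x < y)
    exact Real.sign_nonneg_of_nonneg (by nlinarith)

lemma eq_zero_of_isLocalExtr (hL : HasSignedDet f x L) (hx : IsLocalExtr f x) : L = 0 :=
  hx.elim hL.eq_zero_of_isLocalMin fun hmax =>
    neg_eq_zero.mp (hL.neg.eq_zero_of_isLocalMin hmax.neg)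

lemma eventually_eq (hL : HasSignedDet f x 0) : ∀ᶠ y in 𝓝 x, f y = f x := by
  have hsmall := hL.tendsto_sign.abs.eventually_lt_const (by simp : |(0 : ℝ)| < 1)
  rw [eventually_nhdsWithin_iff] at hsmall
  filter_upwards [hsmall] with y hy
  rcases eq_or_ne y x with rfl | hyx
  · rfl
  · rcases mul_eq_zero.mp (Real.eq_zero_of_abs_sign_lt_one (hy hyx)) with h | h
    · exact absurd (sub_eq_zero.mp h) hyx
    · exact sub_eq_zero.mp h

lemma eventually_ne (hL : HasSignedDet f x L) (hL0 : L ≠ 0) : ∀ᶠ y in 𝓝[≠] x, f y ≠ f x :=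
  (hL.tendsto_sign.eventually_ne hL0).mono fun y hy hfy => hy (by simp [hfy])

lemma eventually_eq_or_eventually_ne (hL : HasSignedDet f x L) :
    (∀ᶠ y in 𝓝 x, f y = f x) ∨ ∀ᶠ y in 𝓝[≠] x, f y ≠ f x := by
  rcases eq_or_ne L 0 with rfl | hL0
  · exact Or.inl hL.eventually_eq
  · exact Or.inr (hL.eventually_ne hL0)

end HasSignedDet

theorem IsPreconnected.apply_eq_of_hasSignedDet {s : Set ℝ} (hs : IsPreconnected s) {f : ℝ → ℝ}
    (hcont : ∀ x ∈ s, ContinuousAt f x) (hdet : ∀ x ∈ s, ∃ L, HasSignedDet f x L)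
    {z : ℝ} (hz : z ∈ s) (hfz : ∀ᶠ y in 𝓝 z, f y = f z) {x : ℝ} (hx : x ∈ s) : f x = f z := by
  set u := {w | ∀ᶠ y in 𝓝 w, f y = f z}
  suffices closure u ∩ s ⊆ u from
    (hs.subset_of_closure_inter_subset isOpen_setOfPred_eventually_nhds ⟨z, hz, hfz⟩ this hx
      ).self_of_nhds
  rintro w ⟨hwu, hws⟩
  rw [mem_closure_iff_frequently] at hwu
  have hfw : f w = f z := tendsto_nhds_unique_of_frequently_eq (hcont w hws) tendsto_const_nhds
    (hwu.mono fun y hy => hy.self_of_nhds)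
  obtain ⟨L, hL⟩ := hdet w hws
  rcases hL.eventually_eq_or_eventually_ne with hloc | hisol
  · exact hloc.mono fun y hy => hy.trans hfw
  · by_contra hwu'
    rw [eventually_nhdsWithin_iff] at hisol
    refine hwu ?_
    filter_upwards [hisol] with y hy hyu
    rcases eq_or_ne y w with rfl | hyw
    · exact hwu' hyu
    · exact hy hyw (hfw ▸ hyu.self_of_nhds)

/-- If `f` is continuous and signposted detachable on `(a,b)`, then `f` is strictly
increasing, strictly decreasing, or constant on `(a,b)`. -/
theorem continuous_signedDet_strictMono (f : ℝ → ℝ) (a b : ℝ)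
    (hcont : ContinuousOn f (Set.Ioo a b))
    (hdet : ∀ x ∈ Set.Ioo a b, ∃ L : ℝ, HasSignedDet f x L) :
    StrictMonoOn f (Set.Ioo a b) ∨ StrictAntiOn f (Set.Ioo a b) ∨
      (∀ x ∈ Set.Ioo a b, ∀ y ∈ Set.Ioo a b, f x = f y) := by
  by_cases hinj : InjOn f (Ioo a b)
  · rcases lt_or_ge a b with hab | hba
    · exact (hcont.strictMonoOn_of_injOn_Ioo hab hinj).imp_right Or.inl
    · simp [Ioo_eq_empty hba.not_gt]
  obtain ⟨x, hx, y, hy, hxy, hfxy⟩ : ∃ x ∈ Ioo a b, ∃ y ∈ Ioo a b, x < y ∧ f x = f y := by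
    simp only [InjOn, not_forall] at hinj
    obtain ⟨x, hx, y, hy, hfxy, hne⟩ := hinj
    rcases lt_or_gt_of_ne hne with hlt | hlt
    · exact ⟨x, hx, y, hy, hlt, hfxy⟩
    · exact ⟨y, hy, x, hx, hlt, hfxy.symm⟩
  obtain ⟨z, hz, hext⟩ := exists_isLocalExtr_Ioo hxy (hcont.mono (Icc_subset_Ioo hx.1 hy.2)) hfxy
  have hzab : z ∈ Ioo a b := ⟨hx.1.trans hz.1, hz.2.trans hy.2⟩
  obtain ⟨L, hL⟩ := hdet z hzab
  rw [hL.eq_zero_of_isLocalExtr hext] at hL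
  have hconst : ∀ w ∈ Ioo a b, f w = f z := fun w hw =>
    isPreconnected_Ioo.apply_eq_of_hasSignedDet
      (fun v hv => hcont.continuousAt (isOpen_Ioo.mem_nhds hv)) hdet hzab hL.eventually_eq hw
  exact Or.inr (Or.inr fun u hu v hv => (hconst u hu).trans (hconst v hv).symm)
end

section
/- Analogue of Rolle's theorem: if f: [a,b] → ℝ is continuous on [a,b], tendable on (a,b), and f(a) = f(b), then there exists c ∈ (a,b) with τ_f(c) = 0. -/
open Filter Topology Set

/-! At an interior local extremum `c` of `f` (which exists by the usual Rolle argument), a nonzero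
one-sided detachment must be `-1` at a maximum and `1` at a minimum, so if both are nonzero they
agree. If one of them vanishes, `f` is constant on a one-sided neighbourhood of `c`, and at any
interior point of that neighbourhood both detachments are `0`. -/

theorem Real.sign_eq_sign_of_abs_sub_lt_one {r s : ℝ} (h : |Real.sign r - Real.sign s| < 1) :
    Real.sign r = Real.sign s := by
  rcases Real.sign_apply_eq r with hr | hr | hr <;> rcases Real.sign_apply_eq s with hs | hs | hs <;>
    rw [hr, hs] at h ⊢ <;> norm_num [abs_lt] at h

section SignLimits

variable {α : Type*} {l : Filter α} [l.NeBot] {g : α → ℝ} {L : ℝ}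

/-- The signs take values in the discrete set `{-1, 0, 1}`, so a limit of signs is attained. -/
theorem eventually_sign_eq_of_tendsto (h : Tendsto (fun x => Real.sign (g x)) l (𝓝 L)) :
    ∀ᶠ x in l, Real.sign (g x) = L := by
  have hclose : ∀ᶠ x in l, |Real.sign (g x) - L| < 1 / 2 := by
    simpa only [Real.dist_eq] using Metric.tendsto_nhds.1 h (1 / 2) (by norm_num)
  obtain ⟨x₀, hx₀⟩ := hclose.exists
  have hconst : ∀ᶠ x in l, Real.sign (g x) = Real.sign (g x₀) :=
    hclose.mono fun x hx => Real.sign_eq_sign_of_abs_sub_lt_one <| by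
      rw [abs_lt] at hx hx₀ ⊢; constructor <;> linarith
  have hL : Real.sign (g x₀) = L :=
    tendsto_nhds_unique (tendsto_const_nhds.congr' (hconst.mono fun _ hx => hx.symm)) h
  exact hL ▸ hconst

theorem eq_neg_one_of_tendsto_sign_of_nonpos (hg : ∀ᶠ x in l, g x ≤ 0)
    (h : Tendsto (fun x => Real.sign (g x)) l (𝓝 L)) (hL : L ≠ 0) : L = -1 := by
  obtain ⟨x, hx, hgx⟩ := ((eventually_sign_eq_of_tendsto h).and hg).exists
  have hne : g x ≠ 0 := fun h0 => hL (by rw [← hx, h0, Real.sign_zero])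
  rw [← hx, Real.sign_of_neg (lt_of_le_of_ne hgx hne)]

theorem eq_one_of_tendsto_sign_of_nonneg (hg : ∀ᶠ x in l, 0 ≤ g x)
    (h : Tendsto (fun x => Real.sign (g x)) l (𝓝 L)) (hL : L ≠ 0) : L = 1 := by
  obtain ⟨x, hx, hgx⟩ := ((eventually_sign_eq_of_tendsto h).and hg).exists
  have hne : g x ≠ 0 := fun h0 => hL (by rw [← hx, h0, Real.sign_zero])
  rw [← hx, Real.sign_of_pos (lt_of_le_of_ne hgx hne.symm)]

end SignLimits

theorem exists_mem_eventually_nhds_of_eventually_nhdsWithin {X : Type*} [TopologicalSpace X]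
    {s : Set X} {a : X} [(𝓝[s] a).NeBot] {p : X → Prop} (hs : IsOpen s)
    (h : ∀ᶠ x in 𝓝[s] a, p x) : ∃ y ∈ s, ∀ᶠ x in 𝓝 y, p x := by
  obtain ⟨y, hy, hys⟩ := ((eventually_eventually_nhdsWithin.2 h).and self_mem_nhdsWithin).exists
  exact ⟨y, hys, hs.nhdsWithin_eq hys ▸ hy⟩

theorem tendsto_const_add_nhds_zero (c : ℝ) : Tendsto (c + ·) (𝓝 0) (𝓝 c) :=
  (continuous_const_add c).tendsto' 0 c (add_zero c)

theorem hasRightDet_zero_and_hasLeftDet_zero_of_eventually_eq {f : ℝ → ℝ} {x : ℝ}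
    (hf : ∀ᶠ h in 𝓝 0, f (x + h) = f x) : HasRightDet f x 0 ∧ HasLeftDet f x 0 := by
  have h0 : Tendsto (fun h => Real.sign (f (x + h) - f x)) (𝓝 0) (𝓝 0) :=
    tendsto_const_nhds.congr' <| hf.mono fun h hh => by simp only [hh, sub_self, Real.sign_zero]
  exact ⟨h0.mono_left nhdsWithin_le_nhds, h0.mono_left nhdsWithin_le_nhds⟩

theorem exists_mem_hasRightDet_zero_and_hasLeftDet_zero {f : ℝ → ℝ} {c : ℝ} {s U : Set ℝ}
    [(𝓝[s] 0).NeBot] (hs : IsOpen s) (hU : U ∈ 𝓝 c)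
    (h : Tendsto (fun h => Real.sign (f (c + h) - f c)) (𝓝[s] 0) (𝓝 0)) :
    ∃ x ∈ U, HasRightDet f x 0 ∧ HasLeftDet f x 0 := by
  have hflat : ∀ᶠ h in 𝓝[s] 0, c + h ∈ U ∧ f (c + h) = f c :=
    (((tendsto_const_add_nhds_zero c).eventually hU).filter_mono nhdsWithin_le_nhds).and <|
      (eventually_sign_eq_of_tendsto h).mono fun _ hh => sub_eq_zero.1 (Real.sign_eq_zero_iff.1 hh)
  obtain ⟨h₀, -, hh₀⟩ := exists_mem_eventually_nhds_of_eventually_nhdsWithin hs hflat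
  refine ⟨c + h₀, hh₀.self_of_nhds.1, hasRightDet_zero_and_hasLeftDet_zero_of_eventually_eq ?_⟩
  filter_upwards [(tendsto_const_add_nhds_zero h₀).eventually hh₀] with h hh
  rw [add_assoc, hh.2, hh₀.self_of_nhds.2]

theorem IsLocalExtr.hasRightDet_eq_hasLeftDet {f : ℝ → ℝ} {c Lp Lm : ℝ} (hc : IsLocalExtr f c)
    (hp : HasRightDet f c Lp) (hm : HasLeftDet f c Lm) (hp0 : Lp ≠ 0) (hm0 : Lm ≠ 0) :
    Lp = Lm := by
  rcases hc with hmin | hmax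
  · have hge : ∀ᶠ h in 𝓝 0, 0 ≤ f (c + h) - f c :=
      ((tendsto_const_add_nhds_zero c).eventually hmin).mono fun _ => sub_nonneg.2
    rw [eq_one_of_tendsto_sign_of_nonneg (hge.filter_mono nhdsWithin_le_nhds) hp hp0,
      eq_one_of_tendsto_sign_of_nonneg (hge.filter_mono nhdsWithin_le_nhds) hm hm0]
  · have hle : ∀ᶠ h in 𝓝 0, f (c + h) - f c ≤ 0 :=
      ((tendsto_const_add_nhds_zero c).eventually hmax).mono fun _ => sub_nonpos.2
    rw [eq_neg_one_of_tendsto_sign_of_nonpos (hle.filter_mono nhdsWithin_le_nhds) hp hp0,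
      eq_neg_one_of_tendsto_sign_of_nonpos (hle.filter_mono nhdsWithin_le_nhds) hm hm0]

/-- Analogue of Rolle's theorem: if `f` is continuous on `[a,b]`, tendable on `(a,b)`,
and `f a = f b`, then at some `c ∈ (a,b)` the tendency of `f` vanishes. -/
theorem rolle_tendency (f : ℝ → ℝ) (a b : ℝ) (hab : a < b)
    (hcont : ContinuousOn f (Set.Icc a b))
    (htend : ∀ x ∈ Set.Ioo a b, ∃ Lp Lm : ℝ, HasRightDet f x Lp ∧ HasLeftDet f x Lm)
    (hfab : f a = f b) :
    ∃ c ∈ Set.Ioo a b, ∃ Lp Lm : ℝ,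
      HasRightDet f c Lp ∧ HasLeftDet f c Lm ∧ Real.sign (Lp - Lm) = 0 := by
  suffices ∃ x ∈ Ioo a b, ∃ L, HasRightDet f x L ∧ HasLeftDet f x L by
    obtain ⟨x, hx, L, hp, hm⟩ := this
    exact ⟨x, hx, L, L, hp, hm, by rw [sub_self, Real.sign_zero]⟩
  obtain ⟨c, hc, hextr⟩ := exists_isLocalExtr_Ioo hab hcont hfab
  obtain ⟨Lp, Lm, hp, hm⟩ := htend c hc
  by_cases hp0 : Lp = 0
  · subst hp0
    obtain ⟨x, hx, hxp, hxm⟩ :=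
      exists_mem_hasRightDet_zero_and_hasLeftDet_zero isOpen_Ioi (isOpen_Ioo.mem_nhds hc) hp
    exact ⟨x, hx, 0, hxp, hxm⟩
  by_cases hm0 : Lm = 0
  · subst hm0
    obtain ⟨x, hx, hxp, hxm⟩ :=
      exists_mem_hasRightDet_zero_and_hasLeftDet_zero isOpen_Iio (isOpen_Ioo.mem_nhds hc) hm
    exact ⟨x, hx, 0, hxp, hxm⟩
  exact ⟨c, hc, Lp, hp, hextr.hasRightDet_eq_hasLeftDet hp hm hp0 hm0 ▸ hm⟩
end

section
/- Analogue of Lagrange's mean value theorem: if f: [a,b] → ℝ is continuous on [a,b], tendable on (a,b), and f(a) < f(b), then for every value v with f(a) < v < f(b) there exists a point c ∈ (a,b) with f(c) = v, f^;_+(c) = +1, and f^;_−(c) ≠ +1; in particular τ_f(c) = +1 = sgn(f(b) − f(a)). -/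
open Filter Topology Set

/-! Let `c` be the infimum of the points of `[a, b]` where `f` exceeds `v`. Then `f ≤ v` on
`[a, c)`, continuity forces `f c = v`, and points where `f > v` accumulate at `c` from the right.
Hence the right detachment at `c`, which exists by tendability, can only be `1`, while the left
detachment is a limit of values in the closed set `{-1, 0}`. -/

theorem ContinuousOn.exists_upcrossing {α β : Type*} [ConditionallyCompleteLinearOrder α]
    [TopologicalSpace α] [OrderTopology α] [DenselyOrdered α] [LinearOrder β]
    [TopologicalSpace β] [OrderClosedTopology β] {f : α → β} {a b : α} {v : β} (hab : a ≤ b)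
    (hf : ContinuousOn f (Icc a b)) (hv : v ∈ Ioo (f a) (f b)) :
    ∃ c ∈ Ioo a b, f c = v ∧ (∀ᶠ x in 𝓝[<] c, f x ≤ v) ∧ ∃ᶠ x in 𝓝[>] c, v < f x := by
  set S := Icc a b ∩ f ⁻¹' Ioi v
  have hbS : b ∈ S := ⟨right_mem_Icc.2 hab, hv.2⟩
  have hS : IsGLB S (sInf S) := isGLB_csInf ⟨b, hbS⟩ ⟨a, fun x hx => hx.1.1⟩
  set c := sInf S
  have hac_le : a ≤ c := hS.2 fun x hx => hx.1.1
  have hcb_le : c ≤ b := hS.1 hbS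
  have hle : ∀ x ∈ Ico a c, f x ≤ v := fun x hx =>
    not_lt.1 fun hvx => hx.2.not_ge (hS.1 ⟨⟨hx.1, hx.2.le.trans hcb_le⟩, hvx⟩)
  have hvc : v ≤ f c := by
    have : closure S ⊆ Icc a b ∩ f ⁻¹' Ici v :=
      closure_minimal (inter_subset_inter_right _ fun x hx => le_of_lt hx)
        (hf.preimage_isClosed_of_isClosed isClosed_Icc isClosed_Ici)
    exact (this (hS.mem_closure ⟨b, hbS⟩)).2
  have hac : a < c := hac_le.lt_of_ne (ne_of_apply_ne f (hv.1.trans_le hvc).ne)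
  have hcv : f c ≤ v := by
    have : closure (Ico a c) ⊆ Icc a b ∩ f ⁻¹' Iic v :=
      closure_minimal (fun x hx => ⟨⟨hx.1, hx.2.le.trans hcb_le⟩, hle x hx⟩)
        (hf.preimage_isClosed_of_isClosed isClosed_Icc isClosed_Iic)
    exact (this (by rw [closure_Ico hac.ne]; exact right_mem_Icc.2 hac_le)).2
  have hfc : f c = v := le_antisymm hcv hvc
  have hcb : c < b := hcb_le.lt_of_ne (ne_of_apply_ne f (hfc.trans_lt hv.2).ne)
  refine ⟨c, ⟨hac, hcb⟩, hfc, ?_, ?_⟩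
  · filter_upwards [Ioo_mem_nhdsLT hac] with x hx using hle x ⟨hx.1.le, hx.2⟩
  · have hfreq := hS.frequently_mem ⟨b, hbS⟩
    rw [← Ioi_insert, nhdsWithin_insert, frequently_sup, frequently_pure] at hfreq
    exact (hfreq.resolve_left fun hcS => hcS.2.ne' hfc).mono fun x hx => hx.2

theorem HasRightDet.eq_one_of_frequently_lt {f : ℝ → ℝ} {x L : ℝ} (hf : HasRightDet f x L)
    (hfreq : ∃ᶠ y in 𝓝[>] x, f x < f y) : L = 1 := by
  rw [← add_zero x, ← map_add_left_nhdsGT, frequently_map, add_zero] at hfreq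
  exact tendsto_nhds_unique_of_frequently_eq hf tendsto_const_nhds
    (hfreq.mono fun h hh => Real.sign_of_pos (sub_pos.2 hh))

theorem HasLeftDet.eq_neg_one_or_eq_zero_of_eventually_le {f : ℝ → ℝ} {x L : ℝ}
    (hf : HasLeftDet f x L) (hev : ∀ᶠ y in 𝓝[<] x, f y ≤ f x) : L = -1 ∨ L = 0 := by
  rw [← add_zero x, ← map_add_left_nhdsLT, eventually_map, add_zero] at hev
  have : L ∈ ({-1, 0} : Set ℝ) := (toFinite _).isClosed.mem_of_tendsto hf <|
    hev.mono fun h hh => (sub_nonpos.2 hh).lt_or_eq.imp Real.sign_of_neg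
      fun h0 => by simp [h0]
  simpa using this

/-- Analogue of Lagrange's mean value theorem: if `f` is continuous on `[a,b]`,
tendable on `(a,b)`, and `f a < f b`, then for every `v ∈ (f a, f b)` there exists
`c ∈ (a,b)` with `f c = v`, right detachment `+1`, left detachment `≠ +1`, and
hence tendency `+1 = sgn (f b - f a)`. -/
theorem lagrange_tendency (f : ℝ → ℝ) (a b v : ℝ) (hab : a < b)
    (hcont : ContinuousOn f (Set.Icc a b))
    (htend : ∀ x ∈ Set.Ioo a b, ∃ Lp Lm : ℝ, HasRightDet f x Lp ∧ HasLeftDet f x Lm)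
    (hfab : f a < f b) (hv : v ∈ Set.Ioo (f a) (f b)) :
    ∃ c ∈ Set.Ioo a b, f c = v ∧ HasRightDet f c 1 ∧
      ∃ Lm : ℝ, HasLeftDet f c Lm ∧ (Lm = -1 ∨ Lm = 0) ∧
        Real.sign (1 - Lm) = 1 ∧ Real.sign (1 - Lm) = Real.sign (f b - f a) := by
  obtain ⟨c, hc, hfc, hleft, hright⟩ := hcont.exists_upcrossing hab.le hv
  obtain ⟨Lp, Lm, hLp, hLm⟩ := htend c hc
  have hLp1 : Lp = 1 := hLp.eq_one_of_frequently_lt (by rwa [hfc])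
  have hLm' : Lm = -1 ∨ Lm = 0 := hLm.eq_neg_one_or_eq_zero_of_eventually_le (by rwa [hfc])
  have hsign : Real.sign (1 - Lm) = 1 :=
    Real.sign_of_pos (by rcases hLm' with rfl | rfl <;> norm_num)
  refine ⟨c, hc, hfc, hLp1 ▸ hLp, Lm, hLm, hLm', hsign, ?_⟩
  rw [hsign, Real.sign_of_pos (sub_pos.2 hfab)]
end

section
/- Analogue of Darboux's theorem: if f: ℝ → ℝ is continuous and tendable in a neighborhood I of x₀ and x₀ is a strict local maximum (or minimum) of f which is not locally constant on either side, then the image of the tendency τ_f restricted to I contains all three values {−1, 0, +1}, and there are uncountably many points in I where τ_f = +1 and uncountably many where τ_f = −1. -/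
open Filter Topology Set

/-- A point `x` has tendency `τ` if both one-sided detachments exist and
`sgn (Lp - Lm) = τ`. -/
def HasTendency (f : ℝ → ℝ) (x τ : ℝ) : Prop :=
  ∃ Lp Lm : ℝ, HasRightDet f x Lp ∧ HasLeftDet f x Lm ∧ Real.sign (Lp - Lm) = τ

/-! For `y ∈ (f tm, f x₀)` let `c` be the last point of `[tm, x₀]` with `f c = y`. Then `f > y`
just to the right of `c`, so the right detachment at `c` is `+1`, and the tendency at `c` is `+1`
unless the left detachment is `+1` as well, in which case `y` is a local minimum value of `f`.
Local minimum values form a countable set (each is the minimum of `f` on some basic open set), so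
uncountably many values `y`, hence uncountably many points, carry tendency `+1`; the reflection
`x ↦ -x` gives tendency `-1` on `(x₀, tp)`. For tendency `0`, take a maximum point `c` of `f` on
`[tm, tp]`: both detachments at `c` are `-1` or `0`; if both are `-1` the tendency at `c` is `0`,
otherwise `f` is constant on a one-sided neighbourhood of `c`, where the tendency is `0`. -/

theorem Real.sign_eq_one_iff {r : ℝ} : Real.sign r = 1 ↔ 0 < r := by
  refine ⟨fun h => ?_, Real.sign_of_pos⟩
  rcases lt_trichotomy r 0 with hr | rfl | hr
  · rw [Real.sign_of_neg hr] at h; norm_num at h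
  · simp at h
  · exact hr

theorem tendsto_sign_nhds_iff {α : Type*} {l : Filter α} {g : α → ℝ} {L : ℝ} :
    Tendsto (fun x => Real.sign (g x)) l (𝓝 L) ↔ ∀ᶠ x in l, Real.sign (g x) = L := by
  refine ⟨fun h => ?_, fun h => tendsto_const_nhds.congr' (h.mono fun _ => Eq.symm)⟩
  have hU : ({-1, 0, 1} \ {L} : Set ℝ)ᶜ ∈ 𝓝 L :=
    (Set.toFinite _).isClosed.isOpen_compl.mem_nhds fun hL => hL.2 rfl
  filter_upwards [h hU] with x hx
  by_contra hne
  exact hx ⟨Real.sign_apply_eq (g x), hne⟩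

open TopologicalSpace in
theorem countable_image_setOf_isLocalMin {X β : Type*} [TopologicalSpace X]
    [SecondCountableTopology X] [PartialOrder β] (f : X → β) :
    (f '' {x | IsLocalMin f x}).Countable := by
  have hcover : f '' {x | IsLocalMin f x} ⊆
      ⋃ U ∈ countableBasis X, f '' {x | x ∈ U ∧ IsMinOn f U x} := by
    rintro _ ⟨x, hx, rfl⟩
    obtain ⟨U, hU, hxU, hmin⟩ := (isBasis_countableBasis X).mem_nhds_iff.1 hx
    exact mem_biUnion hU ⟨x, ⟨hxU, fun z hz => hmin hz⟩, rfl⟩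
  refine ((countable_countableBasis X).biUnion fun U _ => Subsingleton.countable ?_).mono hcover
  rintro _ ⟨x, ⟨hx, hxmin⟩, rfl⟩ _ ⟨z, ⟨hz, hzmin⟩, rfl⟩
  exact le_antisymm (hxmin hz) (hzmin hx)

theorem ContinuousOn.exists_mem_Ioo_eq_forall_Ioc_lt {f : ℝ → ℝ} {u v y : ℝ} (huv : u ≤ v)
    (hf : ContinuousOn f (Icc u v)) (hy : y ∈ Ioo (f u) (f v)) :
    ∃ c ∈ Ioo u v, f c = y ∧ ∀ z ∈ Ioc c v, y < f z := by
  set K := Icc u v ∩ f ⁻¹' Iic y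
  have hK : IsCompact K := isCompact_Icc.of_isClosed_subset
    (hf.preimage_isClosed_of_isClosed isClosed_Icc isClosed_Iic) inter_subset_left
  have huK : u ∈ K := ⟨left_mem_Icc.2 huv, hy.1.le⟩
  obtain ⟨c, ⟨⟨huc, hcv⟩, hcy⟩, hcmax⟩ := hK.exists_isGreatest ⟨u, huK⟩
  have hgt : ∀ z ∈ Ioc c v, y < f z := fun z hz => not_le.1 fun hzy =>
    hz.1.not_ge (hcmax ⟨⟨huc.trans hz.1.le, hz.2⟩, hzy⟩)
  have hcv : c < v := hcv.lt_of_ne fun h => (hy.2.trans_le (h ▸ hcy)).false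
  have hfc : f c = y := by
    refine le_antisymm hcy (not_lt.1 fun hlt => ?_)
    obtain ⟨w, hw, hfw⟩ := intermediate_value_Icc hcv.le (hf.mono (Icc_subset_Icc_left huc))
      ⟨hlt.le, hy.2.le⟩
    rcases hw.1.eq_or_lt with rfl | hcw
    · exact hlt.ne hfw
    · exact (hgt w ⟨hcw, hw.2⟩).ne' hfw
  refine ⟨c, ⟨huc.lt_of_ne ?_, hcv⟩, hfc, hgt⟩
  rintro rfl
  exact hy.1.ne hfc

section Detachment

variable {f : ℝ → ℝ} {x c L : ℝ}

theorem hasRightDet_iff : HasRightDet f x L ↔ ∀ᶠ z in 𝓝[>] x, Real.sign (f z - f x) = L := by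
  rw [HasRightDet, tendsto_sign_nhds_iff, ← add_zero x, ← map_add_left_nhdsGT, eventually_map,
    add_zero]

theorem hasLeftDet_iff : HasLeftDet f x L ↔ ∀ᶠ z in 𝓝[<] x, Real.sign (f z - f x) = L := by
  rw [HasLeftDet, tendsto_sign_nhds_iff, ← add_zero x, ← map_add_left_nhdsLT, eventually_map,
    add_zero]

theorem HasLeftDet.eq_neg_one_or_eq_zero_or_eq_one (h : HasLeftDet f x L) :
    L = -1 ∨ L = 0 ∨ L = 1 := by
  obtain ⟨z, hz⟩ := (hasLeftDet_iff.1 h).exists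
  exact hz ▸ Real.sign_apply_eq _

theorem hasRightDet_comp_neg : HasRightDet (fun z => f (-z)) x L ↔ HasLeftDet f (-x) L := by
  rw [hasRightDet_iff, hasLeftDet_iff, ← neg_nhdsGT]
  rfl

theorem hasLeftDet_comp_neg : HasLeftDet (fun z => f (-z)) x L ↔ HasRightDet f (-x) L := by
  rw [hasRightDet_iff, hasLeftDet_iff, ← neg_nhdsLT]
  rfl

theorem HasTendency.comp_neg {τ : ℝ} (h : HasTendency (fun z => f (-z)) x τ) :
    HasTendency f (-x) (-τ) := by
  obtain ⟨Lp, Lm, hLp, hLm, hτ⟩ := h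
  exact ⟨Lm, Lp, hasLeftDet_comp_neg.1 hLm, hasRightDet_comp_neg.1 hLp, by
    rw [← hτ, ← Real.sign_neg, neg_sub]⟩

theorem hasTendency_zero_of_eventually_eq (h : ∀ᶠ z in 𝓝 x, f z = f x) : HasTendency f x 0 := by
  have hsign : ∀ᶠ z in 𝓝 x, Real.sign (f z - f x) = 0 := h.mono fun z hz => by simp [hz]
  exact ⟨0, 0, hasRightDet_iff.2 (hsign.filter_mono nhdsWithin_le_nhds),
    hasLeftDet_iff.2 (hsign.filter_mono nhdsWithin_le_nhds), by simp⟩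

theorem hasTendency_one_or_isLocalMin (hr : HasRightDet f x 1) (hl : HasLeftDet f x L) :
    HasTendency f x 1 ∨ IsLocalMin f x := by
  rcases hl.eq_neg_one_or_eq_zero_or_eq_one with rfl | rfl | rfl
  · exact Or.inl ⟨1, -1, hr, hl, Real.sign_of_pos (by norm_num)⟩
  · exact Or.inl ⟨1, 0, hr, hl, by norm_num⟩
  · right
    have hgt_right := eventually_nhdsWithin_iff.1 (hasRightDet_iff.1 hr)
    have hgt_left := eventually_nhdsWithin_iff.1 (hasLeftDet_iff.1 hl)
    filter_upwards [hgt_left, hgt_right] with z hzl hzr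
    rcases lt_trichotomy z x with hz | rfl | hz
    · exact (sub_pos.1 (Real.sign_eq_one_iff.1 (hzl hz))).le
    · exact le_rfl
    · exact (sub_pos.1 (Real.sign_eq_one_iff.1 (hzr hz))).le

theorem eq_neg_one_or_eventually_eq_of_isLocalMax {l : Filter ℝ} [l.NeBot] (hc : IsLocalMax f c)
    (hl : l ≤ 𝓝 c) (h : ∀ᶠ z in l, Real.sign (f z - f c) = L) :
    L = -1 ∨ ∀ᶠ z in l, f z = f c := by
  obtain ⟨z, hzL, hzc⟩ := (h.and (hl hc)).exists
  rcases hzc.lt_or_eq with hlt | heq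
  · exact Or.inl (hzL ▸ Real.sign_of_neg (sub_neg.2 hlt))
  · have hL : L = 0 := by rw [← hzL, heq, sub_self, Real.sign_zero]
    exact Or.inr (h.mono fun w hw => by rwa [hL, Real.sign_eq_zero_iff, sub_eq_zero] at hw)

theorem exists_hasTendency_zero_of_eventually_nhdsWithin_eq {s t : Set ℝ} [(𝓝[t] c).NeBot]
    (ht : IsOpen t) (hs : s ∈ 𝓝 c) (h : ∀ᶠ z in 𝓝[t] c, f z = f c) :
    ∃ d ∈ s, HasTendency f d 0 := by
  have hloc : ∀ᶠ d in 𝓝[t] c, ∀ᶠ z in 𝓝 d, f z = f c := by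
    filter_upwards [eventually_eventually_nhdsWithin.2 h, self_mem_nhdsWithin] with d hd hdt
    rwa [ht.nhdsWithin_eq hdt] at hd
  obtain ⟨d, hd, hfd, hds⟩ := (hloc.and (h.and (mem_nhdsWithin_of_mem_nhds hs))).exists
  exact ⟨d, hds, hasTendency_zero_of_eventually_eq (hd.mono fun z hz => hz.trans hfd.symm)⟩

theorem exists_hasTendency_zero_of_isLocalMax {Lp Lm : ℝ} {s : Set ℝ} (hc : IsLocalMax f c)
    (hs : s ∈ 𝓝 c) (hr : HasRightDet f c Lp) (hl : HasLeftDet f c Lm) :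
    ∃ d ∈ s, HasTendency f d 0 := by
  rcases eq_neg_one_or_eventually_eq_of_isLocalMax hc nhdsWithin_le_nhds (hasRightDet_iff.1 hr)
    with rfl | hconst
  · rcases eq_neg_one_or_eventually_eq_of_isLocalMax hc nhdsWithin_le_nhds (hasLeftDet_iff.1 hl)
      with rfl | hconst
    · exact ⟨c, mem_of_mem_nhds hs, -1, -1, hr, hl, by simp⟩
    · exact exists_hasTendency_zero_of_eventually_nhdsWithin_eq isOpen_Iio hs hconst
  · exact exists_hasTendency_zero_of_eventually_nhdsWithin_eq isOpen_Ioi hs hconst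

end Detachment

section Interval

variable {f : ℝ → ℝ} {u v : ℝ}

theorem not_countable_setOf_hasTendency_one (huv : u ≤ v) (hf : ContinuousOn f (Icc u v))
    (hlt : f u < f v) (hleft : ∀ x ∈ Ioo u v, ∃ L, HasLeftDet f x L) :
    ¬ {x ∈ Ioo u v | HasTendency f x 1}.Countable := by
  intro hT
  have hcover : Ioo (f u) (f v) ⊆
      f '' {x ∈ Ioo u v | HasTendency f x 1} ∪ f '' {x | IsLocalMin f x} := by
    intro y hy
    obtain ⟨c, hc, rfl, hgt⟩ := hf.exists_mem_Ioo_eq_forall_Ioc_lt huv hy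
    have hr : HasRightDet f c 1 := hasRightDet_iff.2 <| by
      filter_upwards [Ioc_mem_nhdsGT hc.2] with z hz
      exact Real.sign_of_pos (sub_pos.2 (hgt z hz))
    obtain ⟨L, hl⟩ := hleft c hc
    rcases hasTendency_one_or_isLocalMin hr hl with h | h
    · exact Or.inl ⟨c, ⟨hc, h⟩, rfl⟩
    · exact Or.inr ⟨c, h, rfl⟩
  exact hlt.not_ge <| Cardinal.Real.Ioo_countable_iff.1 <|
    ((hT.image f).union (countable_image_setOf_isLocalMin f)).mono hcover

theorem not_countable_setOf_hasTendency_neg_one (huv : u ≤ v) (hf : ContinuousOn f (Icc u v))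
    (hlt : f v < f u) (hright : ∀ x ∈ Ioo u v, ∃ L, HasRightDet f x L) :
    ¬ {x ∈ Ioo u v | HasTendency f x (-1)}.Countable := by
  intro hT
  refine not_countable_setOf_hasTendency_one (f := fun z => f (-z)) (neg_le_neg huv)
    (hf.comp continuousOn_neg fun z hz => neg_mem_Icc_iff.2 hz) (by simpa using hlt)
    (fun x hx => ?_) ((hT.preimage neg_injective).mono fun x hx => ?_)
  · obtain ⟨L, hL⟩ := hright (-x) (neg_mem_Ioo_iff.2 hx)
    exact ⟨L, hasLeftDet_comp_neg.2 hL⟩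
  · exact ⟨neg_mem_Ioo_iff.2 hx.1, hx.2.comp_neg⟩

theorem exists_hasTendency_zero_of_lt_of_lt {w : ℝ} (hw : w ∈ Icc u v)
    (hf : ContinuousOn f (Icc u v)) (hu : f u < f w) (hv : f v < f w)
    (htend : ∀ x ∈ Ioo u v, ∃ Lp Lm, HasRightDet f x Lp ∧ HasLeftDet f x Lm) :
    ∃ x ∈ Ioo u v, HasTendency f x 0 := by
  obtain ⟨c, hc, hcmax⟩ := isCompact_Icc.exists_isMaxOn ⟨w, hw⟩ hf
  have hc' : c ∈ Ioo u v :=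
    ⟨hc.1.lt_of_ne (by rintro rfl; exact (hcmax hw).not_gt hu),
      hc.2.lt_of_ne (by rintro rfl; exact (hcmax hw).not_gt hv)⟩
  obtain ⟨Lp, Lm, hr, hl⟩ := htend c hc'
  exact exists_hasTendency_zero_of_isLocalMax (hcmax.isLocalMax (Icc_mem_nhds hc'.1 hc'.2))
    (isOpen_Ioo.mem_nhds hc') hr hl

end Interval

theorem darboux_tendency_general (f : ℝ → ℝ) (a b x₀ tm tp : ℝ)
    (hcont : ContinuousOn f (Set.Ioo a b))
    (htend : ∀ x ∈ Set.Ioo a b, ∃ Lp Lm : ℝ, HasRightDet f x Lp ∧ HasLeftDet f x Lm)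
    (htm : tm ∈ Set.Ioo a b) (htp : tp ∈ Set.Ioo a b)
    (h1 : tm < x₀) (h2 : x₀ < tp) (h3 : f tm < f x₀) (h4 : f tp < f x₀) :
    (∀ τ ∈ ({-1, 0, 1} : Set ℝ), ∃ x ∈ Set.Ioo a b, HasTendency f x τ) ∧
      ¬ (Set.Countable {x ∈ Set.Ioo a b | HasTendency f x 1}) ∧
      ¬ (Set.Countable {x ∈ Set.Ioo a b | HasTendency f x (-1)}) := by
  have hsub : Icc tm tp ⊆ Ioo a b := Icc_subset_Ioo htm.1 htp.2
  have hleft : Icc tm x₀ ⊆ Ioo a b := (Icc_subset_Icc_right h2.le).trans hsub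
  have hright : Icc x₀ tp ⊆ Ioo a b := (Icc_subset_Icc_left h1.le).trans hsub
  have hplus : ¬ {x ∈ Ioo a b | HasTendency f x 1}.Countable := fun hc =>
    not_countable_setOf_hasTendency_one h1.le (hcont.mono hleft) h3
      (fun x hx => let ⟨_, L, _, hL⟩ := htend x (hleft (Ioo_subset_Icc_self hx)); ⟨L, hL⟩)
      (hc.mono (inter_subset_inter_left _ (Ioo_subset_Icc_self.trans hleft)))
  have hminus : ¬ {x ∈ Ioo a b | HasTendency f x (-1)}.Countable := fun hc =>
    not_countable_setOf_hasTendency_neg_one h2.le (hcont.mono hright) h4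
      (fun x hx => let ⟨L, _, hL, _⟩ := htend x (hright (Ioo_subset_Icc_self hx)); ⟨L, hL⟩)
      (hc.mono (inter_subset_inter_left _ (Ioo_subset_Icc_self.trans hright)))
  refine ⟨?_, hplus, hminus⟩
  rintro τ (rfl | rfl | rfl)
  · exact nonempty_iff_ne_empty.2 fun h => hminus (h ▸ countable_empty)
  · obtain ⟨x, hx, h0⟩ := exists_hasTendency_zero_of_lt_of_lt ⟨h1.le, h2.le⟩ (hcont.mono hsub)
      h3 h4 fun x hx => htend x (hsub (Ioo_subset_Icc_self hx))
    exact ⟨x, hsub (Ioo_subset_Icc_self hx), h0⟩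
  · exact nonempty_iff_ne_empty.2 fun h => hplus (h ▸ countable_empty)

/-- Analogue of Darboux's theorem: if `f` is continuous and tendable on an open
interval `I = (a,b)` containing `x₀`, `x₀` is a local maximum of `f`, and `f` takes
strictly smaller values at some points on both sides, then the tendency attains all
three values `-1, 0, +1` on `I`, and the sets where the tendency is `+1`
(respectively `-1`) are uncountable. -/
theorem darboux_tendency (f : ℝ → ℝ) (a b x₀ tm tp : ℝ)
    (hx : x₀ ∈ Set.Ioo a b)
    (hcont : ContinuousOn f (Set.Ioo a b))
    (htend : ∀ x ∈ Set.Ioo a b, ∃ Lp Lm : ℝ, HasRightDet f x Lp ∧ HasLeftDet f x Lm)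
    (hmax : ∀ᶠ x in 𝓝 x₀, f x ≤ f x₀)
    (htm : tm ∈ Set.Ioo a b) (htp : tp ∈ Set.Ioo a b)
    (h1 : tm < x₀) (h2 : x₀ < tp) (h3 : f tm < f x₀) (h4 : f tp < f x₀) :
    (∀ τ ∈ ({-1, 0, 1} : Set ℝ), ∃ x ∈ Set.Ioo a b, HasTendency f x τ) ∧
      ¬ (Set.Countable {x ∈ Set.Ioo a b | HasTendency f x 1}) ∧
      ¬ (Set.Countable {x ∈ Set.Ioo a b | HasTendency f x (-1)}) :=
  darboux_tendency_general f a b x₀ tm tp hcont htend htm htp h1 h2 h3 h4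
end

section
/- If f: ℝ → ℝ is differentiable at x₀ with f'(x₀) ≠ 0, then f is signposted detachable at x₀ (and not detachable there), and its signposted detachment and tendency at x₀ both equal sgn(f'(x₀)). -/
open Filter Topology Set

/-!
The difference quotient `h⁻¹ (f (x₀ + h) - f x₀)` tends to `L ≠ 0` and `sgn` is continuous away
from `0`, so its sign tends to `sgn L`. As `sgn` is multiplicative, `sgn (f (x₀ + h) - f x₀)` is
`sgn h` times that sign and `sgn (h (f (x₀ + h) - f x₀))` equals it. The two one-sided
detachments are therefore `± sgn L`, which differ, so there is no two-sided one.
-/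

namespace Real

theorem sign_mul (a b : ℝ) : sign (a * b) = sign a * sign b := by
  rcases lt_trichotomy a 0 with ha | rfl | ha <;> rcases lt_trichotomy b 0 with hb | rfl | hb <;>
    simp [sign_of_neg, sign_of_pos, mul_pos_of_neg_of_neg, mul_neg_of_neg_of_pos,
      mul_neg_of_pos_of_neg, *]

theorem sign_sign (r : ℝ) : sign (sign r) = sign r := by
  rcases sign_apply_eq r with h | h | h <;> rw [h] <;> simp [sign_of_neg]

theorem sign_add_self (r : ℝ) : sign (r + r) = sign r := by
  rw [← two_mul, sign_mul, sign_of_pos two_pos, one_mul]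

theorem continuousAt_sign {r : ℝ} (hr : r ≠ 0) : ContinuousAt sign r := by
  rcases hr.lt_or_gt with hr | hr
  · exact continuousAt_const.congr <| (eventually_lt_nhds hr).mono fun y hy =>
      (sign_of_neg hy).symm
  · exact continuousAt_const.congr <| (eventually_gt_nhds hr).mono fun y hy =>
      (sign_of_pos hy).symm

end Real

namespace HasDerivAt

variable {f : ℝ → ℝ} {x L : ℝ}

theorem tendsto_sign_slope_zero (hf : HasDerivAt f L x) (hL : L ≠ 0) :
    Tendsto (fun h => Real.sign (h⁻¹ * (f (x + h) - f x))) (𝓝[≠] 0) (𝓝 (Real.sign L)) :=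
  (Real.continuousAt_sign hL).tendsto.comp hf.tendsto_slope_zero

theorem hasRightDet_sign (hf : HasDerivAt f L x) (hL : L ≠ 0) :
    HasRightDet f x (Real.sign L) := by
  refine ((hf.tendsto_sign_slope_zero hL).mono_left (nhdsGT_le_nhdsNE 0)).congr' ?_
  filter_upwards [self_mem_nhdsWithin] with h (hh : 0 < h)
  rw [Real.sign_mul, Real.sign_inv, Real.sign_of_pos hh, one_mul]

theorem hasLeftDet_neg_sign (hf : HasDerivAt f L x) (hL : L ≠ 0) :
    HasLeftDet f x (-Real.sign L) := by
  refine ((hf.tendsto_sign_slope_zero hL).mono_left (nhdsLT_le_nhdsNE 0)).neg.congr' ?_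
  filter_upwards [self_mem_nhdsWithin] with h (hh : h < 0)
  rw [Real.sign_mul, Real.sign_inv, Real.sign_of_neg hh, neg_one_mul, neg_neg]

theorem hasSignedDet_sign (hf : HasDerivAt f L x) (hL : L ≠ 0) :
    HasSignedDet f x (Real.sign L) := by
  refine (hf.tendsto_sign_slope_zero hL).congr' ?_
  filter_upwards with h
  rw [Real.sign_mul, Real.sign_mul, Real.sign_inv]

end HasDerivAt

theorem not_hasDet_of_hasRightDet_of_hasLeftDet {f : ℝ → ℝ} {x a b : ℝ}
    (hR : HasRightDet f x a) (hL : HasLeftDet f x b) (hab : a ≠ b) : ¬ ∃ M, HasDet f x M := by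
  rintro ⟨M, hM⟩
  have hMa : M = a := tendsto_nhds_unique (Tendsto.mono_left hM (nhdsGT_le_nhdsNE 0)) hR
  have hMb : M = b := tendsto_nhds_unique (Tendsto.mono_left hM (nhdsLT_le_nhdsNE 0)) hL
  exact hab (hMa.symm.trans hMb)

/-- If `f` is differentiable at `x₀` with `f'(x₀) = L ≠ 0`, then `f` is signposted
detachable at `x₀` (with signposted detachment and tendency `sgn L`) and not
detachable there. -/
theorem deriv_ne_zero_signedDetachable (f : ℝ → ℝ) (x₀ L : ℝ)
    (hd : HasDerivAt f L x₀) (hL : L ≠ 0) :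
    HasRightDet f x₀ (Real.sign L) ∧ HasLeftDet f x₀ (-(Real.sign L)) ∧
      HasSignedDet f x₀ (Real.sign L) ∧
      Real.sign (Real.sign L - (-(Real.sign L))) = Real.sign L ∧
      ¬ ∃ M : ℝ, HasDet f x₀ M := by
  have hsign : Real.sign L ≠ -Real.sign L := fun h =>
    hL (Real.sign_eq_zero_iff.mp (self_eq_neg.mp h))
  refine ⟨hd.hasRightDet_sign hL, hd.hasLeftDet_neg_sign hL, hd.hasSignedDet_sign hL, ?_,
    not_hasDet_of_hasRightDet_of_hasLeftDet (hd.hasRightDet_sign hL) (hd.hasLeftDet_neg_sign hL)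
      hsign⟩
  rw [sub_neg_eq_add, Real.sign_add_self, Real.sign_sign]
end

section
/- If a detachable function f: ℝ → ℝ is even, then its detachment f^; is even; if f is odd and detachable, then f^; is odd. -/
open Filter Topology Set

/-! The reflection `h ↦ -h` preserves the punctured neighbourhood of `0`, so `f ∘ neg` has at `-x`
the detachment that `f` has at `x`, while negating `f` negates its detachment; detachments are
unique, being limits in a Hausdorff space along a nontrivial filter. -/

theorem tendsto_neg_nhdsNE_zero : Tendsto (fun h : ℝ => -h) (𝓝[≠] 0) (𝓝[≠] 0) := by
  simpa [Tendsto, ← Filter.map_neg] using (Filter.neg_nhdsNE (a := (0 : ℝ))).le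

namespace HasDet

variable {f : ℝ → ℝ} {x L : ℝ}

theorem comp_neg (h : HasDet f x L) : HasDet (fun y => f (-y)) (-x) L :=
  (h.comp tendsto_neg_nhdsNE_zero).congr fun t => by simp [neg_add_eq_sub, sub_eq_add_neg]

theorem neg (h : HasDet f x L) : HasDet (fun y => -f y) x (-L) :=
  (Tendsto.neg h).congr fun t => by rw [← Real.sign_neg]; ring_nf

theorem unique {L' : ℝ} (h : HasDet f x L) (h' : HasDet f x L') : L = L' :=
  tendsto_nhds_unique h h'

end HasDet

/-- If a detachable function is even, its detachment is even; if it is odd,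
its detachment is odd. -/
theorem det_even_odd (f g : ℝ → ℝ) (hdet : ∀ x : ℝ, HasDet f x (g x)) :
    ((∀ x : ℝ, f (-x) = f x) → ∀ x : ℝ, g (-x) = g x) ∧
    ((∀ x : ℝ, f (-x) = -f x) → ∀ x : ℝ, g (-x) = -g x) := by
  constructor
  · intro heven x
    have h := (hdet x).comp_neg
    simp only [heven] at h
    exact (hdet (-x)).unique h
  · intro hodd x
    have h := (hdet x).comp_neg.neg
    simp only [hodd, neg_neg] at h
    exact (hdet (-x)).unique h
end

section
/- There exists a function f: [0,1] → ℝ that is differentiable almost everywhere but tendable at no point; concretely, f(x) = 1/n³ if x = m/n with m, n coprime positive integers, and f(x) = 0 if x is irrational, is differentiable (with derivative 0) at almost every irrational point, yet f is not tendable at any irrational point and not signposted detachable anywhere. -/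
open Filter Topology Set

/-!
At an irrational `x` both the rationals (where `f > 0 = f x`) and the irrationals (where
`f = 0 = f x`) accumulate from either side, so `sgn (f (x + h) - f x)` takes the values `1`
and `0` arbitrarily close to `0⁺` and to `0⁻` and has no one-sided limit.

Differentiability is Borel–Cantelli: for fixed `k`, the points of `[0, 1]` within `k / q³` of
some `p / q` have measure `O(k² / q²)`, which is summable in `q`. So almost every `x` is
irrational and, for every `k`, only finitely many denominators `q` come that close to `x`.
As rationals near an irrational `x` have large denominators, `k |f y - f x| ≤ |y - x|`
eventually for every `k`, i.e. `f' x = 0`.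
-/

open MeasureTheory

lemma Dense.frequently_nhdsGT_add {D : Set ℝ} (hD : Dense D) (x : ℝ) :
    ∃ᶠ h in 𝓝[>] 0, x + h ∈ D := by
  rw [(nhdsGT_basis 0).frequently_iff]
  intro ε hε
  obtain ⟨y, hyD, hxy, hyx⟩ := hD.exists_between (show x < x + ε by linarith)
  exact ⟨y - x, ⟨by linarith, by linarith⟩, by simpa using hyD⟩

lemma Dense.frequently_nhdsLT_add {D : Set ℝ} (hD : Dense D) (x : ℝ) :
    ∃ᶠ h in 𝓝[<] 0, x + h ∈ D := by
  rw [(nhdsLT_basis 0).frequently_iff]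
  intro ε hε
  obtain ⟨y, hyD, hxy, hyx⟩ := hD.exists_between (show x + ε < x by linarith)
  exact ⟨y - x, ⟨by linarith, by linarith⟩, by simpa using hyD⟩

lemma not_tendsto_of_frequently_eq {α β : Type*} [TopologicalSpace β] [T1Space β]
    {u : α → β} {l : Filter α} {a b : β} (hab : a ≠ b)
    (ha : ∃ᶠ x in l, u x = a) (hb : ∃ᶠ x in l, u x = b) (L : β) : ¬ Tendsto u l (𝓝 L) := by
  intro hu
  have hLa : L = a := isClosed_singleton.mem_of_frequently_of_tendsto ha hu
  have hLb : L = b := isClosed_singleton.mem_of_frequently_of_tendsto hb hu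
  exact hab (hLa.symm.trans hLb)

section Detachment

variable {g : ℝ → ℝ} (hirr : ∀ x, Irrational x → g x = 0) (hrat : ∀ q : ℚ, 0 < g q)
include hirr hrat

lemma not_tendsto_sign_sub_of_irrational {x : ℝ} (hx : Irrational x) {l : Filter ℝ}
    (hl_rat : ∃ᶠ h in l, x + h ∈ range ((↑) : ℚ → ℝ))
    (hl_irr : ∃ᶠ h in l, Irrational (x + h)) (L : ℝ) :
    ¬ Tendsto (fun h => Real.sign (g (x + h) - g x)) l (𝓝 L) := by
  refine not_tendsto_of_frequently_eq one_ne_zero (hl_rat.mono ?_) (hl_irr.mono ?_) L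
  · rintro h ⟨q, hq⟩
    rw [← hq, hirr x hx, sub_zero, Real.sign_of_pos (hrat q)]
  · intro h hh
    rw [hirr x hx, hirr _ hh, sub_zero, Real.sign_zero]

lemma not_hasRightDet_of_irrational {x : ℝ} (hx : Irrational x) (L : ℝ) :
    ¬ HasRightDet g x L :=
  not_tendsto_sign_sub_of_irrational hirr hrat hx (Rat.denseRange_cast.frequently_nhdsGT_add x)
    (dense_irrational.frequently_nhdsGT_add x) L

lemma not_hasLeftDet_of_irrational {x : ℝ} (hx : Irrational x) (L : ℝ) :
    ¬ HasLeftDet g x L :=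
  not_tendsto_sign_sub_of_irrational hirr hrat hx (Rat.denseRange_cast.frequently_nhdsLT_add x)
    (dense_irrational.frequently_nhdsLT_add x) L

end Detachment

def goodApprox (k q : ℕ) : Set ℝ :=
  {x | ∃ p : ℤ, |x - p / q| < k / q ^ 3}

lemma goodApprox_zero_right (k : ℕ) : goodApprox k 0 = ∅ := by
  ext x
  simp [goodApprox, (abs_nonneg x).not_gt]

lemma goodApprox_inter_Icc_subset {k q : ℕ} (hq : 0 < q) :
    goodApprox k q ∩ Icc 0 1 ⊆
      ⋃ p ∈ Finset.Icc (-(k * q : ℤ)) ((k + 1) * q), Metric.ball ((p : ℝ) / q) (k / q ^ 3) := by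
  rintro x ⟨⟨p, hp⟩, hx0, hx1⟩
  refine mem_biUnion (x := p) ?_ (by rwa [Metric.mem_ball, Real.dist_eq])
  have hq' : (0 : ℝ) < q := by exact_mod_cast hq
  have hrad : (k : ℝ) / q ^ 3 ≤ k := div_le_self k.cast_nonneg (one_le_pow₀ (by exact_mod_cast hq))
  obtain ⟨hlo, hhi⟩ := abs_lt.1 hp
  have hp_lo : -(k : ℝ) * q < p := by
    have := (lt_div_iff₀ hq').1 (show -(k : ℝ) < p / q by linarith)
    linarith
  have hp_hi : (p : ℝ) < (k + 1) * q := (div_lt_iff₀ hq').1 (by linarith)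
  rw [Finset.mem_coe, Finset.mem_Icc]
  constructor
  · exact_mod_cast (show ((-(k * q : ℤ) : ℤ) : ℝ) < p by push_cast; linarith).le
  · exact_mod_cast (show (p : ℝ) < (((k + 1) * q : ℤ) : ℝ) by push_cast; linarith).le

lemma volume_goodApprox_inter_Icc_le (k q : ℕ) :
    volume (goodApprox k q ∩ Icc 0 1) ≤ ENNReal.ofReal (4 * k * (k + 1) / q ^ 2) := by
  rcases q.eq_zero_or_pos with rfl | hq
  · simp [goodApprox_zero_right]
  have hcard : (Finset.Icc (-(k * q : ℤ)) ((k + 1) * q)).card ≤ (2 * k + 2) * q := by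
    have : (k + 1) * (q : ℤ) + 1 - -(k * q) ≤ ((2 * k + 2) * q : ℕ) := by
      push_cast
      nlinarith
    rw [Int.card_Icc]
    omega
  calc volume (goodApprox k q ∩ Icc 0 1)
      ≤ ∑ p ∈ Finset.Icc (-(k * q : ℤ)) ((k + 1) * q),
          volume (Metric.ball ((p : ℝ) / q) (k / q ^ 3)) :=
        (measure_mono (goodApprox_inter_Icc_subset hq)).trans (measure_biUnion_finset_le _ _)
    _ = (Finset.Icc (-(k * q : ℤ)) ((k + 1) * q)).card * ENNReal.ofReal (2 * (k / q ^ 3)) := by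
        simp [Real.volume_ball]
    _ ≤ ((2 * k + 2) * q : ℕ) * ENNReal.ofReal (2 * (k / q ^ 3)) := by
        gcongr
    _ = ENNReal.ofReal (4 * k * (k + 1) / q ^ 2) := by
        rw [← ENNReal.ofReal_natCast, ← ENNReal.ofReal_mul (by positivity)]
        congr 1
        push_cast
        field_simp
        ring

lemma measure_limsup_goodApprox_eq_zero (k : ℕ) :
    volume.restrict (Icc (0 : ℝ) 1) (limsup (goodApprox k) atTop) = 0 := by
  refine measure_limsup_atTop_eq_zero (ne_top_of_le_ne_top
    (b := ENNReal.ofReal (∑' q : ℕ, 4 * k * (k + 1) / (q : ℝ) ^ 2)) ENNReal.ofReal_ne_top ?_)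
  have hsum : Summable fun q : ℕ => 4 * k * (k + 1) / (q : ℝ) ^ 2 := by
    simp_rw [div_eq_mul_inv]
    exact (Real.summable_nat_pow_inv.2 one_lt_two).mul_left _
  rw [ENNReal.ofReal_tsum_of_nonneg (fun q => by positivity) hsum]
  refine ENNReal.tsum_le_tsum fun q => ?_
  rw [Measure.restrict_apply' measurableSet_Icc]
  exact volume_goodApprox_inter_Icc_le k q

lemma Irrational.eventually_lt_den {x : ℝ} (hx : Irrational x) (N : ℕ) :
    ∀ᶠ y in 𝓝 x, ∀ r : ℚ, (r : ℝ) = y → N < r.den := by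
  -- the fractions `m / n` with `1 ≤ n ≤ N`: a closed set missing `x`
  set C := ⋃ n ∈ Finset.Icc 1 N, (fun y : ℝ => y * n) ⁻¹' range ((↑) : ℤ → ℝ)
  have hC : IsClosed C := isClosed_biUnion_finset fun n _ =>
    Real.isClosed_range_intCast.preimage (continuous_mul_const _)
  have hxC : x ∉ C := by
    simp only [C, mem_iUnion, mem_preimage, mem_range, Finset.mem_Icc, not_exists]
    intro n hn m hm
    exact (hx.mul_natCast (by omega)).ne_int m hm.symm
  filter_upwards [hC.isOpen_compl.mem_nhds hxC] with y hy r hr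
  by_contra! hden
  refine hy (mem_biUnion (Finset.mem_Icc.2 ⟨r.den_pos, hden⟩) ⟨r.num, ?_⟩)
  show ((r.num : ℤ) : ℝ) = y * r.den
  rw [← hr]
  exact_mod_cast r.mul_den_eq_num.symm

lemma hasDerivAt_zero_of_forall_eventually_mul_le {f : ℝ → ℝ} {x : ℝ}
    (h : ∀ k : ℕ, ∀ᶠ y in 𝓝 x, k * |f y - f x| ≤ |y - x|) : HasDerivAt f 0 x := by
  rw [hasDerivAt_iff_isLittleO]
  simp only [smul_zero, sub_zero]
  refine Asymptotics.IsLittleO.of_bound fun c hc => ?_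
  obtain ⟨k, hk⟩ := exists_nat_gt c⁻¹
  have hck : 1 < k * c := by rwa [inv_lt_iff_one_lt_mul₀ hc] at hk
  filter_upwards [h k] with y hy
  rw [Real.norm_eq_abs, Real.norm_eq_abs]
  nlinarith [abs_nonneg (f y - f x), abs_nonneg (y - x)]

section Differentiability

variable {g : ℝ → ℝ} (hirr : ∀ x, Irrational x → g x = 0)
  (hrat : ∀ q : ℚ, |g q| ≤ 1 / (q.den : ℝ) ^ 3)
include hirr hrat

lemma eventually_mul_abs_sub_le {x : ℝ} (hx : Irrational x) {k : ℕ}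
    (hk : x ∉ limsup (goodApprox k) atTop) : ∀ᶠ y in 𝓝 x, k * |g y - g x| ≤ |y - x| := by
  rw [mem_limsup_iff_frequently_mem, not_frequently] at hk
  obtain ⟨N, hN⟩ := eventually_atTop.1 hk
  filter_upwards [hx.eventually_lt_den N] with y hy
  by_cases hyirr : Irrational y
  · simp [hirr y hyirr, hirr x hx]
  obtain ⟨r, rfl⟩ := not_not.1 hyirr
  have hden : (0 : ℝ) < r.den := by exact_mod_cast r.den_pos
  have hfar : (k : ℝ) / r.den ^ 3 ≤ |(r : ℝ) - x| := by
    have hr := hN r.den (hy r rfl).le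
    simp only [goodApprox, mem_ofPred_eq, not_exists, not_lt] at hr
    rw [abs_sub_comm, Rat.cast_def]
    exact hr r.num
  calc k * |g r - g x| = k * |g r| := by rw [hirr x hx, sub_zero]
    _ ≤ k * (1 / r.den ^ 3) := by gcongr; exact hrat r
    _ = k / r.den ^ 3 := mul_one_div _ _
    _ ≤ |(r : ℝ) - x| := hfar

lemma ae_hasDerivAt_zero : ∀ᵐ x ∂(volume.restrict (Icc (0 : ℝ) 1)), HasDerivAt g 0 x := by
  have h_irr : ∀ᵐ x ∂(volume.restrict (Icc (0 : ℝ) 1)), Irrational x :=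
    ae_restrict_of_ae (measure_eq_zero_iff_ae_notMem.1 ((countable_range _).measure_zero _))
  have h_lim : ∀ᵐ x ∂(volume.restrict (Icc (0 : ℝ) 1)), ∀ k, x ∉ limsup (goodApprox k) atTop :=
    ae_all_iff.2 fun k => measure_eq_zero_iff_ae_notMem.1 (measure_limsup_goodApprox_eq_zero k)
  filter_upwards [h_irr, h_lim] with x hx hk
  exact hasDerivAt_zero_of_forall_eventually_mul_le fun k =>
    eventually_mul_abs_sub_le hirr hrat hx (hk k)

end Differentiability

noncomputable def cubeThomae : ℝ → ℝ :=
  Function.extend ((↑) : ℚ → ℝ) (fun q => 1 / (q.den : ℝ) ^ 3) 0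

lemma cubeThomae_ratCast (q : ℚ) : cubeThomae q = 1 / (q.den : ℝ) ^ 3 :=
  Rat.cast_injective.extend_apply _ _ q

lemma cubeThomae_of_irrational {x : ℝ} (hx : Irrational x) : cubeThomae x = 0 :=
  Function.extend_apply' _ _ x hx

lemma cubeThomae_ratCast_pos (q : ℚ) : 0 < cubeThomae q := by
  rw [cubeThomae_ratCast]
  have : (0 : ℝ) < q.den := by exact_mod_cast q.den_pos
  positivity

/-- There exists a function on `[0,1]` (extended to `ℝ`) vanishing at irrationals and
equal to `1/n³` at rationals with lowest-terms denominator `n`, which is differentiable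
(with derivative `0`) almost everywhere on `[0,1]`, yet tendable at no irrational
point of `[0,1]` (neither one-sided detachment exists there). -/
theorem exists_ae_differentiable_nowhere_tendable :
    ∃ f : ℝ → ℝ,
      (∀ x : ℝ, Irrational x → f x = 0) ∧
      (∀ q : ℚ, f (q : ℝ) = 1 / (q.den : ℝ) ^ 3) ∧
      (∀ᵐ x ∂(MeasureTheory.volume.restrict (Set.Icc (0:ℝ) 1)), HasDerivAt f 0 x) ∧
      (∀ x ∈ Set.Icc (0:ℝ) 1, Irrational x →
        (¬ ∃ Lp : ℝ, HasRightDet f x Lp) ∧ (¬ ∃ Lm : ℝ, HasLeftDet f x Lm)) := by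
  have hirr : ∀ x : ℝ, Irrational x → cubeThomae x = 0 := fun _ => cubeThomae_of_irrational
  have hbound : ∀ q : ℚ, |cubeThomae q| ≤ 1 / (q.den : ℝ) ^ 3 := fun q => by
    rw [abs_of_pos (cubeThomae_ratCast_pos q), cubeThomae_ratCast]
  refine ⟨cubeThomae, hirr, cubeThomae_ratCast, ae_hasDerivAt_zero hirr hbound,
    fun x _ hx => ⟨?_, ?_⟩⟩
  · exact fun ⟨L, hL⟩ => not_hasRightDet_of_irrational hirr cubeThomae_ratCast_pos hx L hL
  · exact fun ⟨L, hL⟩ => not_hasLeftDet_of_irrational hirr cubeThomae_ratCast_pos hx L hL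
end
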